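/- (Sub) Deducibility is closed under substitution: for every finite set A of formulas, every formula s, every variable x, and every well-typed term t of the same type as x, if A ⊢ s then A[x:=t] ⊢ s[x:=t], where [x:=t] is capture-free substitution applied to every formula. -/

import Mathlib

namespace PTT


/-- Simple types over a single base type `B`. -/
inductive Ty : Type
  | base : Ty
  | arrow : Ty → Ty → Ty
deriving DecidableEq

/-- Names: the constants `⊥` and `→`, and variables (an index together with a type). -/
inductive Name : Type
  | bot : Name
  | imp : Name
  | var : ℕ → Ty → Name
deriving DecidableEq

/-- The type of a name. -/
def Name.ty : Name → Ty
  | .bot => .base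
  | .imp => .arrow .base (.arrow .base .base)
  | .var _ σ => σ

/-- Terms: names, abstraction over a variable, application. -/
inductive Tm : Type
  | name : Name → Tm
  | lam : ℕ → Ty → Tm → Tm
  | app : Tm → Tm → Tm
deriving DecidableEq

/-- The term `⊥`. -/
def botTm : Tm := .name .bot

/-- The variable `(n, σ)` as a term. -/
def vr (n : ℕ) (σ : Ty) : Tm := .name (.var n σ)

/-- Implication `s → t`. -/
def impTm (s t : Tm) : Tm := .app (.app (.name .imp) s) t

/-- `⊤ := ⊥ → ⊥`. -/
def topTm : Tm := impTm botTm botTm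

/-- `¬ s := s → ⊥`. -/
def negTm (s : Tm) : Tm := impTm s botTm

/-- `s ∨ t := (s → t) → t`. -/
def orTm (s t : Tm) : Tm := impTm (impTm s t) t

/-- `s ∧ t := ¬(¬s ∨ ¬t)`. -/
def andTm (s t : Tm) : Tm := negTm (orTm (negTm s) (negTm t))

/-- `s ≡ t := (s → t) ∧ (t → s)`. -/
def equivTm (s t : Tm) : Tm := andTm (impTm s t) (impTm t s)

/-- The typing relation. -/
inductive HasTy : Tm → Ty → Prop
  | name (x : Name) : HasTy (.name x) x.ty
  | lam {n σ s τ} : HasTy s τ → HasTy (.lam n σ s) (.arrow σ τ)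
  | app {s t σ τ} : HasTy s (.arrow σ τ) → HasTy t σ → HasTy (.app s t) τ

/-- Free variables of a term. -/
def fv : Tm → Finset (ℕ × Ty)
  | .name (.var n σ) => {(n, σ)}
  | .name _ => ∅
  | .lam n σ s => (fv s).erase (n, σ)
  | .app s t => fv s ∪ fv t

/-- A term is closed if it has no free variables. -/
def Closed (s : Tm) : Prop := fv s = ∅

/-- Capture-free parallel substitution (bound variables are renamed). -/
def substAux (ρ : ℕ × Ty → Tm) : Tm → Tm
  | .name (.var n σ) => ρ (n, σ)
  | .name x => .name x
  | .app s t => .app (substAux ρ s) (substAux ρ t)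
  | .lam n σ s =>
      let used : Finset ℕ :=
        ((fv s).erase (n, σ)).biUnion (fun p => (fv (ρ p)).image Prod.fst)
      let m : ℕ := used.sup id + 1
      .lam m σ (substAux (Function.update ρ (n, σ) (vr m σ)) s)

/-- Capture-free substitution `s[(n,σ) := t]`. -/
def subst (s : Tm) (n : ℕ) (σ : Ty) (t : Tm) : Tm :=
  substAux (Function.update (fun p => vr p.1 p.2) (n, σ) t) s

/-- Contexts: terms with exactly one hole (possibly under binders). -/
inductive Ctx : Type
  | hole : Ctx
  | lam : ℕ → Ty → Ctx → Ctx
  | appL : Ctx → Tm → Ctx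
  | appR : Tm → Ctx → Ctx

/-- Filling the hole of a context with a term (capturing is allowed). -/
def Ctx.fill : Ctx → Tm → Tm
  | .hole, s => s
  | .lam n σ C, s => .lam n σ (C.fill s)
  | .appL C t, s => .app (C.fill s) t
  | .appR t C, s => .app t (C.fill s)

/-- `C` captures the variable `p` if the hole of `C` lies below a binder for `p`. -/
def Ctx.captures : Ctx → ℕ × Ty → Prop
  | .hole, _ => False
  | .lam n σ C, p => p = (n, σ) ∨ C.captures p
  | .appL C _, p => C.captures p
  | .appR _ C, p => C.captures p

/-- `C` is admissible for `A` if it captures no variable free in `A`. -/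
def Ctx.Admissible (C : Ctx) (A : Finset Tm) : Prop :=
  ∀ p ∈ A.biUnion fv, ¬ C.captures p

/-- `s` is a subterm of `t`. -/
def Subterm (s t : Tm) : Prop := ∃ C : Ctx, C.fill s = t

/-- β-redexes. -/
def IsBetaRedex : Tm → Prop
  | .app (.lam _ _ _) _ => True
  | _ => False

/-- A term is β-normal if none of its subterms is a β-redex. -/
def BetaNormal (t : Tm) : Prop := ∀ s, Subterm s t → ¬ IsBetaRedex s

/-- Lambda equivalence: the least equivalence on well-typed terms containing
α-, β-, η-conversion and closed under arbitrary contexts. -/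
inductive LamEq : Tm → Tm → Prop
  | refl {s σ} : HasTy s σ → LamEq s s
  | symm {s t} : LamEq s t → LamEq t s
  | trans {s t u} : LamEq s t → LamEq t u → LamEq s u
  | alpha {n m σ s τ} : HasTy (.lam n σ s) τ → (m, σ) ∉ fv s →
      LamEq (.lam n σ s) (.lam m σ (subst s n σ (vr m σ)))
  | beta {n σ s t τ} : HasTy (.app (.lam n σ s) t) τ →
      LamEq (.app (.lam n σ s) t) (subst s n σ t)
  | eta {n σ s τ} : HasTy (.lam n σ (.app s (vr n σ))) τ → (n, σ) ∉ fv s →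
      LamEq (.lam n σ (.app s (vr n σ))) s
  | ctx {s t σ} (C : Ctx) : LamEq s t → HasTy (C.fill s) σ → LamEq (C.fill s) (C.fill t)

/-- The standard set-theoretic interpretation of types: `B` is interpreted as the
two truth values (`Bool`), functional types as full function spaces. -/
def Ty.sem : Ty → Type
  | .base => Bool
  | .arrow σ τ => σ.sem → τ.sem

def Ty.semDefault : (σ : Ty) → σ.sem
  | .base => false
  | .arrow _ τ => fun _ => τ.semDefault

instance (σ : Ty) : Inhabited σ.sem := ⟨σ.semDefault⟩

noncomputable instance Ty.semFintype : (σ : Ty) → Fintype σ.sem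
  | .base => inferInstanceAs (Fintype Bool)
  | .arrow σ τ =>
      letI := Ty.semFintype σ
      letI := Ty.semFintype τ
      letI := Classical.decEq σ.sem
      inferInstanceAs (Fintype (σ.sem → τ.sem))

def Ty.semCast {σ τ : Ty} (h : σ = τ) (v : σ.sem) : τ.sem := h ▸ v

/-- An interpretation assigns to every variable a value of the corresponding type
(the constants `⊥` and `→` have their values fixed). -/
def Interp : Type := ℕ → (σ : Ty) → σ.sem

def Interp.update (I : Interp) (n : ℕ) (σ : Ty) (v : σ.sem) : Interp :=
  fun m τ => if h : m = n ∧ τ = σ then Ty.semCast h.2.symm v else I m τ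

/-- Type inference. -/
def typeOf : Tm → Option Ty
  | .name x => some x.ty
  | .lam _ σ s => (typeOf s).map (Ty.arrow σ)
  | .app s t =>
      match typeOf s, typeOf t with
      | some (.arrow σ τ), some σ' => if σ = σ' then some τ else none
      | _, _ => none

/-- The canonical extension `Î` of an interpretation to all terms: `eval I s σ`
is the value of `s` at type `σ` (on well-typed terms this is the usual
denotation; junk default values are used at type mismatches). -/
def eval (I : Interp) : Tm → (σ : Ty) → σ.sem
  | .name (.var n τ), σ => if h : τ = σ then Ty.semCast h (I n τ) else default
  | .name .bot, σ =>
      match σ with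
      | .base => false
      | _ => default
  | .name .imp, σ =>
      match σ with
      | .arrow .base (.arrow .base .base) => fun a b => !a || b
      | _ => default
  | .app s t, σ =>
      match typeOf t with
      | some τ => eval I s (.arrow τ σ) (eval I t τ)
      | none => default
  | .lam n τ s, σ =>
      match σ with
      | .base => default
      | .arrow σ₁ σ₂ =>
          if h : σ₁ = τ then
            fun a => eval (I.update n τ (Ty.semCast h a)) s σ₂
          else default

/-- `I` satisfies the formula `s` if `Î s = 1`. -/
def Satisfies (I : Interp) (s : Tm) : Prop := eval I s .base = true

/-- A formula is valid if every interpretation satisfies it. -/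
def ValidFml (s : Tm) : Prop := ∀ I : Interp, Satisfies I s

/-- A sequent `A ⇒ s` is valid if every interpretation satisfying `A` satisfies `s`. -/
def ValidSeq (A : Finset Tm) (s : Tm) : Prop :=
  ∀ I : Interp, (∀ t ∈ A, Satisfies I t) → Satisfies I s

/-- Finite disjunction (the empty disjunction is `⊥`). -/
def orList : List Tm → Tm
  | [] => botTm
  | [s] => s
  | s :: l => orTm s (orList l)

/-- Finite conjunction (the empty conjunction is `⊤`). -/
def andList : List Tm → Tm
  | [] => topTm
  | [s] => s
  | s :: l => andTm s (andList l)

/-- The argument types of a type (every type has the form `σ₁…σₙB`). -/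
def Ty.args : Ty → List Ty
  | .base => []
  | .arrow σ τ => σ :: τ.args

/-- Tuples of values along a list of types. -/
def Tup : List Ty → Type
  | [] => PUnit
  | σ :: l => σ.sem × Tup l

noncomputable instance TupFintype : (l : List Ty) → Fintype (Tup l)
  | [] => inferInstanceAs (Fintype PUnit)
  | σ :: l =>
      letI := TupFintype l
      inferInstanceAs (Fintype (σ.sem × Tup l))

/-- Applying a function value to a tuple of arguments (the result type is `B`). -/
def Ty.applyTup : (σ : Ty) → σ.sem → Tup σ.args → Bool
  | .base, a, _ => a
  | .arrow _ τ, f, p => τ.applyTup (f p.1) p.2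

/-- Quote/identity data for each type in a list: a quote function and the term `≐`. -/
def ArgData : List Ty → Type
  | [] => PUnit
  | σ :: l => ((σ.sem → Tm) × Tm) × ArgData l

/-- The conjunction list `x_k ≐_{σ_k} (↓_{σ_k} b_k), …` for a tuple `b`. -/
def eqConj : (l : List Ty) → ArgData l → ℕ → Tup l → List Tm
  | [], _, _, _ => []
  | σ :: l, (d, ds), k, (b, bs) =>
      (.app (.app d.2 (vr k σ)) (d.1 b)) :: eqConj l ds (k + 1) bs

/-- `λ x_k : σ_k. …` binding one variable for each type in the list. -/
def mkLams : (l : List Ty) → ℕ → Tm → Tm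
  | [], _, body => body
  | σ :: l, k, body => .lam k σ (mkLams l (k + 1) body)

/-- The body of the quote term
`↓_{σ₁…σₙB} a := λx₁…xₙ. ⋁_{b₁…bₙ, a b₁…bₙ = 1} ⋀_j x_j ≐_{σ_j} (↓_{σ_j} b_j)`. -/
noncomputable def quoteBodyAux (σ : Ty) (ad : ArgData σ.args) (a : σ.sem) : Tm :=
  mkLams σ.args 0 (orList
    ((((Finset.univ : Finset (Tup σ.args)).toList.filter
        (fun b => σ.applyTup a b))).map
      (fun b => andList (eqConj σ.args ad 0 b))))

/-- `∀σ := λf. ⋀_{a ∈ Bσ} f (↓σ a)`, given the quote function for `σ`. -/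
noncomputable def allTmAux (σ : Ty) (q : σ.sem → Tm) : Tm :=
  .lam 0 (.arrow σ .base)
    (andList (((Finset.univ : Finset σ.sem).toList).map
      (fun a => .app (vr 0 (.arrow σ .base)) (q a))))

mutual
  /-- The quote function `↓σ` together with the identity term `≐σ`. -/
  noncomputable def quoteEq : (σ : Ty) → ((σ.sem → Tm) × Tm)
    | .base =>
        (fun a => quoteBodyAux .base PUnit.unit a,
         .lam 0 .base (.lam 1 .base (equivTm (vr 0 .base) (vr 1 .base))))
    | .arrow σ τ =>
        (fun a => quoteBodyAux (.arrow σ τ) ((quoteEq σ, argData τ) : ArgData (σ :: τ.args)) a,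
         .lam 0 (.arrow σ τ) (.lam 1 (.arrow σ τ)
           (.app (allTmAux σ (quoteEq σ).1)
             (.lam 2 σ
               (.app (.app (quoteEq τ).2
                  (.app (vr 0 (.arrow σ τ)) (vr 2 σ)))
                (.app (vr 1 (.arrow σ τ)) (vr 2 σ)))))))
  /-- Quote/identity data for all argument types of a type. -/
  noncomputable def argData : (σ : Ty) → ArgData σ.args
    | .base => PUnit.unit
    | .arrow σ τ => ((quoteEq σ, argData τ) : ArgData (σ :: τ.args))
end

/-- The quote function `↓σ : Bσ → Λ`. -/
noncomputable def quote (σ : Ty) (a : σ.sem) : Tm := (quoteEq σ).1 a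

/-- The term `≐σ : σσB` denoting the identity predicate on `Bσ`. -/
noncomputable def eqTm (σ : Ty) : Tm := (quoteEq σ).2

/-- The term `∀σ : (σB)B`. -/
noncomputable def allTm (σ : Ty) : Tm := allTmAux σ (quote σ)


/-- Propositional formulas: `s ::= x | ⊥ | s → s` with `x` a variable of type `B`. -/
inductive Propositional : Tm → Prop
  | var (n : ℕ) : Propositional (vr n .base)
  | bot : Propositional botTm
  | imp {s t} : Propositional s → Propositional t → Propositional (impTm s t)

/-- A type-respecting substitution of terms for variables. -/
def IsSubstitution (ρ : ℕ × Ty → Tm) : Prop := ∀ n σ, HasTy (ρ (n, σ)) σ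

/-- A formula is tautologous if it is a substitution instance of a tautology
(a valid propositional formula). -/
def Tautologous (s : Tm) : Prop :=
  ∃ t ρ, Propositional t ∧ ValidFml t ∧ IsSubstitution ρ ∧ s = substAux ρ t

/-- The proof system: Triv, Weak, Ded, MP, DN, Lam and Boolean replacement (BR).
Sequents consist of a finite set of formulas and a formula. -/
inductive Ded : Finset Tm → Tm → Prop
  | triv {A s} : (∀ t ∈ A, HasTy t .base) → HasTy s .base → Ded (insert s A) s
  | weak {A s t} : HasTy s .base → Ded A t → Ded (insert s A) t
  | ded {A s t} : Ded (insert s A) t → Ded A (impTm s t)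
  | mp {A s t} : Ded A (impTm s t) → Ded A s → Ded A t
  | dn {A s} : Ded A (negTm (negTm s)) → Ded A s
  | lam {A s t} : Ded A s → LamEq s t → HasTy t .base → Ded A t
  | br {A s t} (C : Ctx) : C.Admissible A → Ded A (equivTm s t) →
      Ded A (C.fill s) → HasTy (C.fill t) .base → Ded A (C.fill t)

/-!
A theorem `⊢ u` gives `⊢ ⊤ ≡ u`, so Boolean replacement inside the context `(λx. [·]) t`
turns `⊢ (λx. ⊤) t`, which holds by β-conversion, into `⊢ (λx. u) t`; one more β-step
gives `⊢ u[x:=t]`. For a sequent `A ⇒ s` apply this to the closed theorem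
`⊢ a₁ → ⋯ → aₖ → s` obtained by discharging the hypotheses: substitution commutes with `→`,
and the substituted hypotheses are recovered by modus ponens.
-/

theorem HasTy.unique {s : Tm} {σ τ : Ty} (h₁ : HasTy s σ) (h₂ : HasTy s τ) : σ = τ := by
  induction h₁ generalizing τ with
  | name x => cases h₂; rfl
  | lam _ ih => cases h₂ with | lam h => rw [ih h]
  | app _ _ ih _ => cases h₂ with | app hf _ => exact (Ty.arrow.inj (ih hf)).2

theorem hasTy_impTm {a b : Tm} (ha : HasTy a .base) (hb : HasTy b .base) :
    HasTy (impTm a b) .base :=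
  .app (.app (.name .imp) ha) hb

theorem HasTy.of_impTm {a b : Tm} (h : HasTy (impTm a b) .base) :
    HasTy a .base ∧ HasTy b .base := by
  obtain _ | _ | ⟨hab, hb⟩ := h
  obtain _ | _ | ⟨hi, ha⟩ := hab
  obtain ⟨rfl, h'⟩ := Ty.arrow.inj (hi.unique (.name .imp))
  obtain ⟨rfl, -⟩ := Ty.arrow.inj h'
  exact ⟨ha, hb⟩

theorem hasTy_topTm : HasTy topTm .base := hasTy_impTm (.name .bot) (.name .bot)

theorem IsSubstitution.update {ρ : ℕ × Ty → Tm} (hρ : IsSubstitution ρ) (n : ℕ) (σ : Ty)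
    {t : Tm} (ht : HasTy t σ) : IsSubstitution (Function.update ρ (n, σ) t) := by
  intro k τ
  rw [Function.update_apply]
  split_ifs with hk
  · obtain ⟨rfl, rfl⟩ := Prod.mk.inj hk
    exact ht
  · exact hρ k τ

theorem HasTy.substAux {s : Tm} {τ : Ty} (hs : HasTy s τ) {ρ : ℕ × Ty → Tm}
    (hρ : IsSubstitution ρ) : HasTy (substAux ρ s) τ := by
  induction hs generalizing ρ with
  | name x => cases x <;> first | exact .name _ | exact hρ _ _
  | lam _ ih => exact .lam (ih (hρ.update _ _ (.name _)))
  | app _ _ ih₁ ih₂ => exact .app (ih₁ hρ) (ih₂ hρ)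

theorem HasTy.subst {s : Tm} {τ : Ty} (hs : HasTy s τ) {n : ℕ} {σ : Ty} {t : Tm}
    (ht : HasTy t σ) : HasTy (subst s n σ t) τ :=
  hs.substAux (IsSubstitution.update (fun _ _ => .name _) n σ ht)

/-- `impList [a₁, …, aₖ] s = aₖ → ⋯ → a₁ → s`. -/
def impList : List Tm → Tm → Tm
  | [], s => s
  | a :: L, s => impList L (impTm a s)

theorem subst_impList (L : List Tm) (s : Tm) (n : ℕ) (σ : Ty) (t : Tm) :
    subst (impList L s) n σ t = impList (L.map (subst · n σ t)) (subst s n σ t) := by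
  induction L generalizing s with
  | nil => rfl
  | cons a L ih => exact ih (impTm a s)

namespace Ded

theorem hasTy {A : Finset Tm} {s : Tm} (h : Ded A s) :
    (∀ u ∈ A, HasTy u .base) ∧ HasTy s .base := by
  induction h with
  | triv hA hs => exact ⟨Finset.forall_mem_insert _ _ _ |>.2 ⟨hs, hA⟩, hs⟩
  | weak hs _ ih => exact ⟨Finset.forall_mem_insert _ _ _ |>.2 ⟨hs, ih.1⟩, ih.2⟩
  | ded _ ih =>
    obtain ⟨hs, hA⟩ := Finset.forall_mem_insert _ _ _ |>.1 ih.1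
    exact ⟨hA, hasTy_impTm hs ih.2⟩
  | mp _ _ ih _ => exact ⟨ih.1, ih.2.of_impTm.2⟩
  | dn _ ih => exact ⟨ih.1, ih.2.of_impTm.1.of_impTm.1⟩
  | lam _ _ ht ih => exact ⟨ih.1, ht⟩
  | br _ _ _ _ ht ih => exact ⟨ih.1, ht⟩

theorem of_mem {A : Finset Tm} {s : Tm} (hs : s ∈ A) (hA : ∀ u ∈ A, HasTy u .base) :
    Ded A s := by
  rw [← Finset.insert_erase hs]
  exact triv (fun u hu => hA u (Finset.mem_of_mem_erase hu)) (hA s hs)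

theorem mono {A B : Finset Tm} {s : Tm} (h : Ded A s) (hAB : A ⊆ B)
    (hB : ∀ u ∈ B, HasTy u .base) : Ded B s := by
  suffices ∀ C : Finset Tm, (∀ u ∈ C, HasTy u .base) → Ded (C ∪ A) s by
    rw [← Finset.sdiff_union_of_subset hAB]
    exact this _ fun u hu => hB u (Finset.sdiff_subset hu)
  intro C hC
  induction C using Finset.induction_on with
  | empty => simpa using h
  | insert a C _ ih =>
    obtain ⟨ha, hC⟩ := Finset.forall_mem_insert _ _ _ |>.1 hC
    rw [Finset.insert_union]
    exact weak ha (ih hC)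

theorem top {A : Finset Tm} (hA : ∀ u ∈ A, HasTy u .base) : Ded A topTm :=
  ded (triv hA (.name .bot))

theorem andTm_intro {A : Finset Tm} {p q : Tm} (hp : Ded A p) (hq : Ded A q) :
    Ded A (andTm p q) := by
  obtain ⟨hA, tp⟩ := hp.hasTy
  have tq := hq.hasTy.2
  have tnp : HasTy (negTm p) .base := hasTy_impTm tp (.name .bot)
  have tnq : HasTy (negTm q) .base := hasTy_impTm tq (.name .bot)
  set H := impTm (impTm (negTm p) (negTm q)) (negTm q)
  have tH : HasTy H .base := hasTy_impTm (hasTy_impTm tnp tnq) tnq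
  have hAH : ∀ u ∈ insert H A, HasTy u .base := Finset.forall_mem_insert _ _ _ |>.2 ⟨tH, hA⟩
  -- `¬p → ¬q` holds vacuously, since `¬p` contradicts `p`
  have hnpnq : Ded (insert H A) (impTm (negTm p) (negTm q)) :=
    ded <| ded <| weak tq <| mp (of_mem (Finset.mem_insert_self _ _)
      (Finset.forall_mem_insert _ _ _ |>.2 ⟨tnp, hAH⟩)) (weak tnp (weak tH hp))
  exact ded (mp (mp (of_mem (Finset.mem_insert_self _ _) hAH) hnpnq) (weak tH hq))

theorem equivTm_topTm {A : Finset Tm} {u : Tm} (hu : Ded A u) : Ded A (equivTm topTm u) := by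
  obtain ⟨hA, tu⟩ := hu.hasTy
  exact andTm_intro (ded (weak hasTy_topTm hu)) (ded (weak tu (top hA)))

theorem subst_of_empty {u : Tm} (hu : Ded ∅ u) {n : ℕ} {σ : Ty} {t : Tm} (ht : HasTy t σ) :
    Ded ∅ (subst u n σ t) := by
  let C : Ctx := .appL (.lam n σ .hole) t
  have hadm : C.Admissible ∅ := by simp [Ctx.Admissible]
  have tC : HasTy (C.fill u) .base := .app (.lam hu.hasTy.2) ht
  have tCtop : HasTy (C.fill topTm) .base := .app (.lam hasTy_topTm) ht
  have hCtop : Ded ∅ (C.fill topTm) := lam (top (by simp)) (.symm (.beta tCtop)) tCtop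
  exact lam (br C hadm (equivTm_topTm hu) hCtop tC) (.beta tC) (hu.hasTy.2.subst ht)

theorem impList_of_toFinset {L : List Tm} {s : Tm} (h : Ded L.toFinset s) :
    Ded ∅ (impList L s) := by
  induction L generalizing s with
  | nil => simpa [impList] using h
  | cons a L ih => exact ih (ded (by simpa using h))

theorem of_impList {B : Finset Tm} {L : List Tm} {s : Tm} (hL : ∀ a ∈ L, Ded B a)
    (h : Ded B (impList L s)) : Ded B s := by
  induction L generalizing s with
  | nil => exact h
  | cons a L ih =>
    rw [List.forall_mem_cons] at hL
    exact mp (ih hL.2 h) hL.1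

end Ded

/-- Sub: deducibility is closed under capture-free substitution of a
term `t` (of the same type as the variable `(n, σ)`) throughout the sequent. -/
theorem sub (A : Finset Tm) (s : Tm) (n : ℕ) (σ : Ty) (t : Tm)
    (ht : HasTy t σ) (h : Ded A s) :
    Ded (A.image (fun u => subst u n σ t)) (subst s n σ t) := by
  have hB : ∀ u ∈ A.image (fun u => subst u n σ t), HasTy u .base :=
    Finset.forall_mem_image.2 fun u hu => (h.hasTy.1 u hu).subst ht
  have hclosed : Ded ∅ (subst (impList A.toList s) n σ t) :=
    (Ded.impList_of_toFinset (by rwa [Finset.toList_toFinset])).subst_of_empty ht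
  rw [subst_impList] at hclosed
  refine Ded.of_impList (fun a ha => Ded.of_mem ?_ hB) (hclosed.mono (Finset.empty_subset _) hB)
  simpa using ha

end PTT
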